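/- Let C be a quantum channel from ℂ^d to ℂ^d and let δ ≥ 0. Suppose that ‖ |w⟩⟨w| − C(|w⟩⟨w|) ‖₁ ≤ δ for every unit vector w ∈ ℂ^d. Then for every pair of orthonormal vectors φ, φ' ∈ ℂ^d, the ℓ²→ℓ² operator norm satisfies ‖ |φ⟩⟨φ'| − C(|φ⟩⟨φ'|) ‖ ≤ δ; in particular, |⟨φ| ( |φ⟩⟨φ'| − C(|φ⟩⟨φ'|) ) |φ'⟩| ≤ δ. -/

import Mathlib

open Matrix BigOperators Kronecker ComplexOrder

noncomputable section

def IsDensityMatrix {n : Type*} [Fintype n] (ρ : Matrix n n ℂ) : Prop :=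
  ρ.PosSemidef ∧ ρ.trace = 1

def IsQuantumChannel {nA nB : Type*} [Fintype nA] [Fintype nB] [DecidableEq nA]
    (N : Matrix nA nA ℂ → Matrix nB nB ℂ) : Prop :=
  ∃ (k : ℕ) (K : Fin k → Matrix nB nA ℂ),
    (∀ X, N X = ∑ l, K l * X * (K l)ᴴ) ∧ (∑ l, (K l)ᴴ * K l) = 1

def ptraceSnd {n m : Type*} [Fintype m] (X : Matrix (n × m) (n × m) ℂ) : Matrix n n ℂ :=
  Matrix.of fun a a' => ∑ b, X (a, b) (a', b)

def ptraceFst {n m : Type*} [Fintype n] (X : Matrix (n × m) (n × m) ℂ) : Matrix m m ℂ :=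
  Matrix.of fun b b' => ∑ a, X (a, b) (a, b')

def vonNeumannEntropy {n : Type*} [Fintype n] [DecidableEq n] (ρ : Matrix n n ℂ) : ℝ :=
  if h : ρ.IsHermitian then ∑ i, Real.negMulLog (h.eigenvalues i) else 0

def traceNorm {m n : Type*} [Fintype m] [Fintype n] [DecidableEq n] (A : Matrix m n ℂ) : ℝ :=
  (((Matrix.posSemidef_conjTranspose_mul_self A).1.eigenvectorUnitary : Matrix n n ℂ) *
    diagonal (((↑) : ℝ → ℂ) ∘ Real.sqrt ∘ (Matrix.posSemidef_conjTranspose_mul_self A).1.eigenvalues) *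
    (star (Matrix.posSemidef_conjTranspose_mul_self A).1.eigenvectorUnitary : Matrix n n ℂ)).trace.re

def tensorIdChannel {nA nB : Type*} (d : Type*)
    (C : Matrix nA nA ℂ → Matrix nB nB ℂ)
    (X : Matrix (d × nA) (d × nA) ℂ) : Matrix (d × nB) (d × nB) ℂ :=
  Matrix.of fun p q => C (Matrix.of fun a a' => X (p.1, a) (q.1, a')) p.2 q.2

def maxEntangled (M : ℕ) : Matrix (Fin M × Fin M) (Fin M × Fin M) ℂ :=
  Matrix.of fun p q => if p.1 = p.2 ∧ q.1 = q.2 then (M : ℂ)⁻¹ else 0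

def maxEntVec (M : ℕ) : Fin M × Fin M → ℂ :=
  fun p => if p.1 = p.2 then ((Real.sqrt M : ℝ) : ℂ)⁻¹ else 0

def fidVec {n : Type*} [Fintype n] (ψ : n → ℂ) (ρ : Matrix n n ℂ) : ℝ :=
  (star ψ ⬝ᵥ ρ.mulVec ψ).re

def thermal {n : Type*} [Fintype n] [DecidableEq n] (β : ℝ) (G : Matrix n n ℂ) : Matrix n n ℂ :=
  ((NormedSpace.exp ((-β : ℂ) • G)).trace)⁻¹ • NormedSpace.exp ((-β : ℂ) • G)

def l2OpNorm {m n : ℕ} (A : Matrix (Fin m) (Fin n) ℂ) : ℝ :=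
  ‖(Matrix.toEuclideanLin A).toContinuousLinearMap‖

end

/-! By polarization, `|φ⟩⟨φ'| = ¼ ∑ₖ iᵏ |vₖ⟩⟨vₖ|` with `vₖ = φ + iᵏ φ'` of squared norm `2`, so by
linearity of `C` and the triangle inequality it suffices that `‖P - C P‖ ≤ δ / 2` for every pure
state `P`. Since `C` preserves Hermiticity and trace, `P - C P` is Hermitian and traceless; its
eigenvalues sum to zero, so each has absolute value at most half the sum of their absolute values,
i.e. the operator norm is at most half the trace norm. The matrix-element bound is Cauchy–Schwarz. -/

open scoped Matrix.Norms.L2Operator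

theorem abs_le_half_sum_abs_of_sum_eq_zero {ι : Type*} [Fintype ι] [DecidableEq ι] {f : ι → ℝ}
    (hf : ∑ i, f i = 0) (j : ι) : |f j| ≤ (∑ i, |f i|) / 2 := by
  rw [← Finset.add_sum_erase _ _ (Finset.mem_univ j)] at hf ⊢
  have hrest := Finset.abs_sum_le_sum_abs f (Finset.univ.erase j)
  rw [eq_neg_of_add_eq_zero_right hf, abs_neg] at hrest
  linarith

namespace Matrix.IsHermitian

variable {𝕜 n : Type*} [RCLike 𝕜] [Fintype n] [DecidableEq n] {A : Matrix n n 𝕜}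

theorem trace_cfc (hA : A.IsHermitian) (f : ℝ → ℝ) :
    (cfc f A).trace = ∑ i, (f (hA.eigenvalues i) : 𝕜) := by
  rw [hA.cfc_eq, IsHermitian.cfc, Unitary.conjStarAlgAut_apply, trace_mul_cycle,
    Unitary.coe_star_mul_self, one_mul, trace_diagonal]
  rfl

theorem l2_opNorm_eq (hA : A.IsHermitian) : ‖A‖ = ‖hA.eigenvalues‖ := by
  conv_lhs => rw [hA.spectral_theorem]
  rw [Unitary.conjStarAlgAut_apply, ← Unitary.coe_star, CStarRing.norm_mul_coe_unitary,
    CStarRing.norm_coe_unitary_mul, l2_opNorm_diagonal]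
  simp [Pi.norm_def]

end Matrix.IsHermitian

theorem traceNorm_eq_trace_cfc_sqrt {m n : Type*} [Fintype m] [Fintype n] [DecidableEq n]
    (A : Matrix m n ℂ) : traceNorm A = (cfc Real.sqrt (Aᴴ * A)).trace.re := by
  rw [(posSemidef_conjTranspose_mul_self A).1.cfc_eq, IsHermitian.cfc,
    Unitary.conjStarAlgAut_apply]
  rfl

namespace Matrix.IsHermitian

variable {n : Type*} [Fintype n] [DecidableEq n] {A : Matrix n n ℂ}

theorem traceNorm_eq (hA : A.IsHermitian) : traceNorm A = ∑ i, |hA.eigenvalues i| := by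
  have hsq : Aᴴ * A = cfc (· ^ 2 : ℝ → ℝ) A := by
    rw [cfc_pow_id A 2 hA.isSelfAdjoint, hA.eq, sq]
  rw [traceNorm_eq_trace_cfc_sqrt, hsq, ← cfc_comp' Real.sqrt (· ^ 2) A, hA.trace_cfc]
  simp [Real.sqrt_sq_eq_abs]

theorem l2_opNorm_le_traceNorm_div_two (hA : A.IsHermitian) (h : A.trace = 0) :
    ‖A‖ ≤ traceNorm A / 2 := by
  have hsum : ∑ i, hA.eigenvalues i = 0 := by
    simpa [hA.trace_eq_sum_eigenvalues, ← Complex.ofReal_sum] using h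
  rw [hA.l2_opNorm_eq, hA.traceNorm_eq, pi_norm_le_iff_of_nonneg (by positivity)]
  exact fun i => (Real.norm_eq_abs _).trans_le (abs_le_half_sum_abs_of_sum_eq_zero hsum i)

end Matrix.IsHermitian

namespace IsQuantumChannel

variable {nA nB : Type*} [Fintype nA] [Fintype nB] [DecidableEq nA]
  {C : Matrix nA nA ℂ → Matrix nB nB ℂ}

theorem exists_linearMap (hC : IsQuantumChannel C) :
    ∃ Φ : Matrix nA nA ℂ →ₗ[ℂ] Matrix nB nB ℂ, ⇑Φ = C := by
  obtain ⟨k, K, hK, -⟩ := hC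
  refine ⟨{ toFun := C, map_add' := ?_, map_smul' := ?_ }, rfl⟩
  · intro X Y
    simp only [hK, Matrix.mul_add, Matrix.add_mul, Finset.sum_add_distrib]
  · intro c X
    simp only [hK, Matrix.mul_smul, Matrix.smul_mul, Finset.smul_sum, RingHom.id_apply]

theorem isHermitian_apply (hC : IsQuantumChannel C) {X : Matrix nA nA ℂ} (hX : X.IsHermitian) :
    (C X).IsHermitian := by
  obtain ⟨k, K, hK, -⟩ := hC
  rw [hK]
  exact isSelfAdjoint_sum _ fun l _ => isHermitian_mul_mul_conjTranspose (K l) hX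

theorem trace_apply (hC : IsQuantumChannel C) (X : Matrix nA nA ℂ) : (C X).trace = X.trace := by
  obtain ⟨k, K, hK, hKK⟩ := hC
  simp_rw [hK, trace_sum, trace_mul_cycle (K _) X, ← trace_sum, ← Finset.sum_mul, hKK, one_mul]

end IsQuantumChannel

theorem IsQuantumChannel.l2_opNorm_sub_apply_le {n : Type*} [Fintype n] [DecidableEq n]
    {C : Matrix n n ℂ → Matrix n n ℂ} (hC : IsQuantumChannel C) {X : Matrix n n ℂ}
    (hX : X.IsHermitian) : ‖X - C X‖ ≤ traceNorm (X - C X) / 2 :=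
  (hX.sub (hC.isHermitian_apply hX)).l2_opNorm_le_traceNorm_div_two
    (by rw [trace_sub, hC.trace_apply, sub_self])

theorem vecMulVec_star_eq_sum_polarization {n : Type*} (x y : n → ℂ) :
    vecMulVec x (star y) = ∑ k : Fin 4, (Complex.I ^ (k : ℕ) / 4) •
      vecMulVec (x + Complex.I ^ (k : ℕ) • y) (star (x + Complex.I ^ (k : ℕ) • y)) := by
  ext a b
  simp only [vecMulVec_apply, Pi.star_apply, RCLike.star_def, star_add, star_smul, star_pow,
    Complex.conj_I, Fin.sum_univ_four, Fin.coe_ofNat_eq_mod, Nat.zero_mod, Nat.one_mod,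
    Nat.reduceMod, Nat.mod_succ, pow_zero, pow_succ, one_mul, mul_neg, neg_mul, neg_neg, one_smul,
    neg_smul, Complex.I_mul_I, Matrix.add_apply, Matrix.smul_apply, Pi.add_apply, Pi.smul_apply,
    Pi.neg_apply, smul_eq_mul]
  linear_combination (x a * starRingEnd ℂ (y b) - y a * starRingEnd ℂ (x b)) / 2 * Complex.I_sq

theorem vecMulVec_smul_star_smul {n : Type*} (c : ℂ) (v : n → ℂ) :
    vecMulVec (c • v) (star (c • v)) = (c * star c) • vecMulVec v (star v) := by
  rw [star_smul, smul_vecMulVec, vecMulVec_smul, smul_smul, mul_comm]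

theorem star_dotProduct_self_add_smul {n : Type*} [Fintype n] {x y : n → ℂ}
    (hx : star x ⬝ᵥ x = 1) (hy : star y ⬝ᵥ y = 1) (hxy : star x ⬝ᵥ y = 0) {c : ℂ}
    (hc : ‖c‖ = 1) : star (x + c • y) ⬝ᵥ (x + c • y) = 2 := by
  have hyx : star y ⬝ᵥ x = 0 := by
    rw [dotProduct_comm, dotProduct_star, dotProduct_comm, hxy, star_zero]
  have hcc : c * starRingEnd ℂ c = 1 := by
    rw [Complex.mul_conj, Complex.normSq_eq_norm_sq, hc]
    norm_num
  simp only [star_add, star_smul, add_dotProduct, dotProduct_add, smul_dotProduct,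
    dotProduct_smul, smul_eq_mul, hx, hy, hxy, hyx, Complex.star_def]
  linear_combination hcc

theorem norm_toLp_eq_one_of_star_dotProduct_self {n : Type*} [Fintype n] {x : n → ℂ}
    (hx : star x ⬝ᵥ x = 1) : ‖WithLp.toLp 2 x‖ = 1 := by
  have hsq : ‖WithLp.toLp 2 x‖ ^ 2 = 1 := by
    rw [@norm_sq_eq_re_inner ℂ, EuclideanSpace.inner_toLp_toLp, dotProduct_comm, hx,
      RCLike.one_re]
  exact (pow_eq_one_iff_of_nonneg (norm_nonneg _) two_ne_zero).mp hsq

theorem norm_star_dotProduct_mulVec_le {m n : Type*} [Fintype m] [Fintype n] [DecidableEq n]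
    (A : Matrix m n ℂ) {x : m → ℂ} {y : n → ℂ} (hx : star x ⬝ᵥ x = 1) (hy : star y ⬝ᵥ y = 1) :
    ‖star x ⬝ᵥ (A *ᵥ y)‖ ≤ ‖A‖ := by
  have hAy := Matrix.l2_opNorm_mulVec A (WithLp.toLp 2 y)
  rw [norm_toLp_eq_one_of_star_dotProduct_self hy, mul_one] at hAy
  calc ‖star x ⬝ᵥ (A *ᵥ y)‖ = ‖inner ℂ (WithLp.toLp 2 x) (WithLp.toLp 2 (A *ᵥ y))‖ := by
        rw [EuclideanSpace.inner_toLp_toLp, dotProduct_comm]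
    _ ≤ ‖WithLp.toLp 2 x‖ * ‖WithLp.toLp 2 (A *ᵥ y)‖ := norm_inner_le_norm _ _
    _ ≤ ‖A‖ := by rw [norm_toLp_eq_one_of_star_dotProduct_self hx, one_mul]; exact hAy

theorem IsQuantumChannel.l2_opNorm_vecMulVec_sub_apply_le {n : Type*} [Fintype n]
    [DecidableEq n] {C : Matrix n n ℂ → Matrix n n ℂ} (hC : IsQuantumChannel C) {δ : ℝ}
    (hw : ∀ w : n → ℂ, star w ⬝ᵥ w = 1 →
      traceNorm (vecMulVec w (star w) - C (vecMulVec w (star w))) ≤ δ)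
    {φ φ' : n → ℂ} (hφ : star φ ⬝ᵥ φ = 1) (hφ' : star φ' ⬝ᵥ φ' = 1)
    (hφφ' : star φ ⬝ᵥ φ' = 0) :
    ‖vecMulVec φ (star φ') - C (vecMulVec φ (star φ'))‖ ≤ δ := by
  obtain ⟨Φ, rfl⟩ := hC.exists_linearMap
  set D : (n → ℂ) → Matrix n n ℂ := fun v => vecMulVec v (star v) - Φ (vecMulVec v (star v))
  have hD : ∀ v, star v ⬝ᵥ v = 2 → ‖D v‖ ≤ δ := by
    intro v hv
    set c : ℂ := ((√2 : ℝ) : ℂ)⁻¹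
    have hcc : c * star c = 1 / 2 := by
      rw [Complex.star_def, Complex.conj_inv, Complex.conj_ofReal, ← mul_inv,
        ← Complex.ofReal_mul, Real.mul_self_sqrt zero_le_two]
      norm_num
    have hunit : star (c • v) ⬝ᵥ (c • v) = 1 := by
      rw [star_smul, smul_dotProduct, dotProduct_smul, hv, smul_eq_mul, smul_eq_mul,
        ← mul_assoc, mul_comm (star c), hcc]
      norm_num
    have hDc : D (c • v) = (1 / 2 : ℂ) • D v := by
      simp only [D, vecMulVec_smul_star_smul, hcc, map_smul, smul_sub]
    have h : ‖D (c • v)‖ ≤ δ / 2 :=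
      (hC.l2_opNorm_sub_apply_le (posSemidef_vecMulVec_self_star (c • v)).isHermitian).trans
        (div_le_div_of_nonneg_right (hw _ hunit) zero_le_two)
    rw [hDc, norm_smul] at h
    norm_num at h
    linarith
  calc ‖vecMulVec φ (star φ') - Φ (vecMulVec φ (star φ'))‖
      = ‖∑ k : Fin 4, (Complex.I ^ (k : ℕ) / 4) • D (φ + Complex.I ^ (k : ℕ) • φ')‖ := by
        rw [vecMulVec_star_eq_sum_polarization, map_sum, ← Finset.sum_sub_distrib]
        simp only [D, map_smul, smul_sub]
    _ ≤ ∑ k : Fin 4, ‖(Complex.I ^ (k : ℕ) / 4) • D (φ + Complex.I ^ (k : ℕ) • φ')‖ :=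
        norm_sum_le _ _
    _ ≤ ∑ _k : Fin 4, δ / 4 := by
        gcongr with k
        rw [norm_smul, norm_div, norm_pow, Complex.norm_I, one_pow, Complex.norm_ofNat]
        have := hD _ (star_dotProduct_self_add_smul hφ hφ' hφφ' (c := Complex.I ^ (k : ℕ))
          (by simp))
        linarith
    _ = δ := by
        simp only [Finset.sum_const, Finset.card_univ, Fintype.card_fin, nsmul_eq_mul]
        ring

theorem off_diagonal_bound_of_pure_state_trace_bound_general
    (d : ℕ)
    (C : Matrix (Fin d) (Fin d) ℂ → Matrix (Fin d) (Fin d) ℂ)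
    (hC : IsQuantumChannel C)
    (δ : ℝ)
    (hw : ∀ w : Fin d → ℂ, star w ⬝ᵥ w = 1 →
      traceNorm (vecMulVec w (star w) - C (vecMulVec w (star w))) ≤ δ) :
    ∀ φ φ' : Fin d → ℂ, star φ ⬝ᵥ φ = 1 → star φ' ⬝ᵥ φ' = 1 → star φ ⬝ᵥ φ' = 0 →
      l2OpNorm (vecMulVec φ (star φ') - C (vecMulVec φ (star φ'))) ≤ δ ∧
      ‖(star φ ⬝ᵥ
        ((vecMulVec φ (star φ') - C (vecMulVec φ (star φ'))) *ᵥ φ'))‖ ≤ δ := by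
  intro φ φ' hφ hφ' hφφ'
  have hnorm := hC.l2_opNorm_vecMulVec_sub_apply_le hw hφ hφ' hφφ'
  exact ⟨hnorm, (norm_star_dotProduct_mulVec_le _ hφ hφ').trans hnorm⟩

/-- Off-diagonal operator-norm bound from trace-distance bounds on
pure states, for a quantum channel close to the identity. -/
theorem off_diagonal_bound_of_pure_state_trace_bound
    (d : ℕ)
    (C : Matrix (Fin d) (Fin d) ℂ → Matrix (Fin d) (Fin d) ℂ)
    (hC : IsQuantumChannel C)
    (δ : ℝ) (hδ : 0 ≤ δ)
    (hw : ∀ w : Fin d → ℂ, star w ⬝ᵥ w = 1 →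
      traceNorm (vecMulVec w (star w) - C (vecMulVec w (star w))) ≤ δ) :
    ∀ φ φ' : Fin d → ℂ, star φ ⬝ᵥ φ = 1 → star φ' ⬝ᵥ φ' = 1 → star φ ⬝ᵥ φ' = 0 →
      l2OpNorm (vecMulVec φ (star φ') - C (vecMulVec φ (star φ'))) ≤ δ ∧
      ‖(star φ ⬝ᵥ
        ((vecMulVec φ (star φ') - C (vecMulVec φ (star φ'))) *ᵥ φ'))‖ ≤ δ :=
  off_diagonal_bound_of_pure_state_trace_bound_general d C hC δ hw
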